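/- arXiv:1005.3659 — 5 statements merged into one kernel-verified Lean document; each statement's English description precedes it below -/
import Mathlib

section
/- Let ψ be a branching mechanism with parameters α > 0, β ≥ 0 and Lévy measure ν, assume ψ(λ) → ∞ as λ → ∞, and let λ* > 0 be the unique positive root of ψ. If ∫_{λ*+1}^∞ (∫_{λ*}^ξ ψ(u) du)^{-1/2} dξ < ∞, then ∫_{λ*+1}^∞ ψ(ξ)^{-1} dξ < ∞. -/
/-!
Each integrand `λ ↦ e^{-λx} - 1 + λx` is convex, so `ψ` is convex on `[0, ∞)`. Since `ψ(λ*) = 0`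
and `ψ > 0` beyond `λ*`, convexity makes `ψ` nondecreasing on `[λ*, ∞)` and gives the secant bound
`ψ(ξ) ≥ ψ(λ* + 1) (ξ - λ*)` for `ξ ≥ λ* + 1`. Monotonicity gives `∫_{λ*}^ξ ψ ≤ (ξ - λ*) ψ(ξ)`, so
`ψ(λ* + 1) ∫_{λ*}^ξ ψ ≤ ψ(ξ)²`, i.e. `ψ(ξ)⁻¹ ≤ ψ(λ* + 1)^{-1/2} (∫_{λ*}^ξ ψ)^{-1/2}`, and the
integrability of the right-hand side transfers to `ψ⁻¹`.
-/

open MeasureTheory Real Set Filter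

namespace ConvexOn

variable {f : ℝ → ℝ} {a : ℝ}

lemma mul_sub_le_mul_sub_of_eq_zero (hf : ConvexOn ℝ (Ici a) f) (ha : f a = 0) {x y : ℝ}
    (hax : a < x) (hxy : x ≤ y) : f x * (y - a) ≤ f y * (x - a) := by
  have hay : a < y := hax.trans_le hxy
  have hsec := hf.secant_mono self_mem_Ici hax.le hay.le hax.ne' hay.ne' hxy
  rwa [ha, sub_zero, sub_zero, div_le_div_iff₀ (by linarith) (by linarith)] at hsec

lemma monotoneOn_Ici_of_eq_zero (hf : ConvexOn ℝ (Ici a) f) (ha : f a = 0)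
    (hpos : ∀ x, a < x → 0 < f x) : MonotoneOn f (Ici a) := by
  intro x (hx : a ≤ x) y (hy : a ≤ y) hxy
  rcases hx.eq_or_lt with rfl | hax
  · rcases hy.eq_or_lt with rfl | hay
    · rfl
    · exact ha ▸ (hpos y hay).le
  · have := hf.mul_sub_le_mul_sub_of_eq_zero ha hax hxy
    nlinarith [hpos x hax, hpos y (hax.trans_le hxy)]

lemma inv_le_inv_sqrt_mul_inv_sqrt_integral (hf : ConvexOn ℝ (Ici a) f) (ha : f a = 0)
    (hpos : ∀ x, a < x → 0 < f x) {ξ : ℝ} (hξ : a + 1 ≤ ξ) :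
    (f ξ)⁻¹ ≤ (√(f (a + 1)))⁻¹ * (√(∫ u in a..ξ, f u))⁻¹ := by
  have haξ : a < ξ := by linarith
  have hmono := hf.monotoneOn_Ici_of_eq_zero ha hpos
  have hint : IntervalIntegrable f volume a ξ :=
    (hmono.mono (uIcc_of_le haξ.le ▸ Icc_subset_Ici_self)).intervalIntegrable
  have hΦ_pos : 0 < ∫ u in a..ξ, f u :=
    intervalIntegral.intervalIntegral_pos_of_pos_on hint (fun u hu => hpos u hu.1) haξ
  have hΦ_le : ∫ u in a..ξ, f u ≤ (ξ - a) * f ξ := by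
    calc ∫ u in a..ξ, f u ≤ ∫ _ in a..ξ, f ξ :=
          intervalIntegral.integral_mono_on haξ.le hint intervalIntegrable_const
            fun u hu => hmono hu.1 haξ.le hu.2
      _ = (ξ - a) * f ξ := by rw [intervalIntegral.integral_const, smul_eq_mul]
  have hsecant : f (a + 1) * (ξ - a) ≤ f ξ := by
    simpa using hf.mul_sub_le_mul_sub_of_eq_zero ha (lt_add_one a) hξ
  have hc : 0 < f (a + 1) := hpos _ (lt_add_one a)
  have hfξ : 0 < f ξ := hpos ξ haξ
  have hsq : f (a + 1) * ∫ u in a..ξ, f u ≤ f ξ ^ 2 := by nlinarith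
  rw [← mul_inv, ← sqrt_mul hc.le]
  exact inv_anti₀ (sqrt_pos.2 (by positivity)) (sqrt_le_left hfξ.le |>.mpr hsq)

end ConvexOn

lemma lintegral_ofReal_ne_top_of_le_const_mul {X : Type*} [MeasurableSpace X] {μ : Measure X}
    {s : Set X} (hs : MeasurableSet s) {g h : X → ℝ} {C : ℝ} (hC : 0 ≤ C)
    (hgh : ∀ ξ ∈ s, g ξ ≤ C * h ξ) (hh : ∫⁻ ξ in s, ENNReal.ofReal (h ξ) ∂μ ≠ ⊤) :
    ∫⁻ ξ in s, ENNReal.ofReal (g ξ) ∂μ ≠ ⊤ := by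
  refine ne_top_of_le_ne_top (ENNReal.mul_ne_top (ENNReal.ofReal_ne_top (r := C)) hh) ?_
  rw [← lintegral_const_mul' _ _ ENNReal.ofReal_ne_top]
  refine setLIntegral_mono_ae' hs (ae_of_all _ fun ξ hξ => ?_)
  rw [← ENNReal.ofReal_mul hC]
  exact ENNReal.ofReal_le_ofReal (hgh ξ hξ)

lemma exp_neg_sub_one_add_le_min {t : ℝ} (ht : 0 ≤ t) : exp (-t) - 1 + t ≤ min t (t ^ 2) := by
  refine le_min (by linarith [exp_le_one_iff.2 (neg_nonpos.2 ht)]) ?_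
  rcases le_total t 1 with ht1 | ht1
  · have := (abs_le.1 (abs_exp_sub_one_sub_id_le (x := -t) (by rwa [abs_neg, abs_of_nonneg ht]))).2
    rwa [neg_sq, sub_neg_eq_add] at this
  · nlinarith [exp_le_one_iff.2 (neg_nonpos.2 ht)]

lemma exp_neg_mul_sub_one_add_mul_le {l x : ℝ} (hl : 0 ≤ l) (hx : 0 ≤ x) :
    exp (-l * x) - 1 + l * x ≤ max l (l ^ 2) * min x (x ^ 2) := by
  rw [neg_mul]
  refine (exp_neg_sub_one_add_le_min (mul_nonneg hl hx)).trans ?_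
  rcases le_total x 1 with hx1 | hx1
  · rw [min_eq_right (by nlinarith : x ^ 2 ≤ x)]
    calc min (l * x) ((l * x) ^ 2) ≤ l ^ 2 * x ^ 2 := (min_le_right _ _).trans_eq (mul_pow l x 2)
      _ ≤ max l (l ^ 2) * x ^ 2 := by gcongr; exact le_max_right _ _
  · rw [min_eq_left (by nlinarith : x ≤ x ^ 2)]
    exact (min_le_left _ _).trans (by gcongr; exact le_max_left _ _)

lemma convexOn_exp_neg_mul_sub_one_add_mul (x : ℝ) :
    ConvexOn ℝ univ fun l : ℝ => exp (-l * x) - 1 + l * x := by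
  have hexp := convexOn_exp.comp_linearMap (LinearMap.smulRight (LinearMap.id : ℝ →ₗ[ℝ] ℝ) (-x))
  have hlin := (LinearMap.smulRight (LinearMap.id : ℝ →ₗ[ℝ] ℝ) x).convexOn convex_univ
  refine ((hexp.add hlin).add_const (-1)).congr fun l _ => ?_
  simp only [Pi.add_apply, Function.comp_apply, LinearMap.smulRight_apply, LinearMap.id_apply,
    smul_eq_mul]
  ring_nf

section BranchingMechanism

variable {ν : Measure ℝ}

lemma integrable_exp_neg_mul_sub_one_add_mul (hν0 : ν (Iic 0) = 0)
    (hν : ∫⁻ x, ENNReal.ofReal (min x (x ^ 2)) ∂ν ≠ ⊤) {l : ℝ} (hl : 0 ≤ l) :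
    Integrable (fun x => exp (-l * x) - 1 + l * x) ν := by
  have hpos : ∀ᵐ x ∂ν, 0 < x := by
    rw [ae_iff]; simp only [not_lt]; exact hν0
  have hmin : Integrable (fun x => min x (x ^ 2)) ν := by
    refine ⟨by fun_prop, (hasFiniteIntegral_iff_ofReal ?_).2 hν.lt_top⟩
    filter_upwards [hpos] with x hx using le_min hx.le (sq_nonneg x)
  refine (hmin.const_mul (max l (l ^ 2))).mono' (by fun_prop) ?_
  filter_upwards [hpos] with x hx
  rw [norm_of_nonneg (by linarith [add_one_le_exp (-l * x)])]
  exact exp_neg_mul_sub_one_add_mul_le hl hx.le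

lemma convexOn_Ici_zero_branchingMechanism {α β : ℝ} (hβ : 0 ≤ β) (hν0 : ν (Iic 0) = 0)
    (hν : ∫⁻ x, ENNReal.ofReal (min x (x ^ 2)) ∂ν ≠ ⊤) :
    ConvexOn ℝ (Ici 0) fun l => -α * l + β * l ^ 2 + ∫ x, (exp (-l * x) - 1 + l * x) ∂ν := by
  have hquadratic : ConvexOn ℝ univ fun l : ℝ => -α * l + β * l ^ 2 := by
    have hlin := (LinearMap.smulRight (LinearMap.id : ℝ →ₗ[ℝ] ℝ) (-α)).convexOn convex_univ
    refine (hlin.add ((even_two.convexOn_pow (𝕜 := ℝ)).smul hβ)).congr fun l _ => ?_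
    simp only [Pi.add_apply, LinearMap.smulRight_apply, LinearMap.id_apply, smul_eq_mul]
    ring
  have hintegral : ConvexOn ℝ (Ici 0) fun l => ∫ x, (exp (-l * x) - 1 + l * x) ∂ν :=
    integral_convexOn_of_integrand_ae (f := fun x l => exp (-l * x) - 1 + l * x) (convex_Ici 0)
      (ae_of_all _ fun x => (convexOn_exp_neg_mul_sub_one_add_mul x).subset (subset_univ _)
        (convex_Ici 0))
      fun _ hl => integrable_exp_neg_mul_sub_one_add_mul hν0 hν hl
  exact (hquadratic.subset (subset_univ _) (convex_Ici 0)).add hintegral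

end BranchingMechanism

theorem A3_implies_inverse_psi_integrable_general
    (α β : ℝ) (hβ : 0 ≤ β)
    (ν : Measure ℝ) (hν0 : ν (Set.Iic 0) = 0)
    (hν : ∫⁻ x, ENNReal.ofReal (min x (x ^ 2)) ∂ν ≠ ⊤)
    (ψ : ℝ → ℝ)
    (hψ : ∀ l : ℝ, ψ l = -α * l + β * l ^ 2 + ∫ x, (Real.exp (-l * x) - 1 + l * x) ∂ν)
    (lstar : ℝ) (hlstar_pos : 0 < lstar) (hlstar_root : ψ lstar = 0)
    (hlstar_unique : ∀ l : ℝ, lstar < l → 0 < ψ l)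
    (hA3 : ∫⁻ ξ in Set.Ici (lstar + 1),
        ENNReal.ofReal ((Real.sqrt (∫ u in lstar..ξ, ψ u))⁻¹) ≠ ⊤) :
    ∫⁻ ξ in Set.Ici (lstar + 1), ENNReal.ofReal (ψ ξ)⁻¹ ≠ ⊤ := by
  have hconvex : ConvexOn ℝ (Ici lstar) ψ :=
    (funext hψ ▸ convexOn_Ici_zero_branchingMechanism hβ hν0 hν).subset
      (Ici_subset_Ici.2 hlstar_pos.le) (convex_Ici _)
  exact lintegral_ofReal_ne_top_of_le_const_mul measurableSet_Ici (by positivity)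
    (fun ξ hξ => hconvex.inv_le_inv_sqrt_mul_inv_sqrt_integral hlstar_root hlstar_unique hξ) hA3

/-- For a branching mechanism `ψ` with `ψ(λ) → ∞` and unique positive
root `λ*`, condition (A3) `∫^∞ (∫_{λ*}^ξ ψ(u) du)^{-1/2} dξ < ∞` implies
`∫^∞ ψ(ξ)⁻¹ dξ < ∞`. -/
theorem A3_implies_inverse_psi_integrable
    (α β : ℝ) (hα : 0 < α) (hβ : 0 ≤ β)
    (ν : Measure ℝ) (hν0 : ν (Set.Iic 0) = 0)
    (hν : ∫⁻ x, ENNReal.ofReal (min x (x ^ 2)) ∂ν ≠ ⊤)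
    (ψ : ℝ → ℝ)
    (hψ : ∀ l : ℝ, ψ l = -α * l + β * l ^ 2 + ∫ x, (Real.exp (-l * x) - 1 + l * x) ∂ν)
    (hψ_top : Tendsto ψ atTop atTop)
    (lstar : ℝ) (hlstar_pos : 0 < lstar) (hlstar_root : ψ lstar = 0)
    (hlstar_unique : ∀ l : ℝ, lstar < l → 0 < ψ l)
    (hA3 : ∫⁻ ξ in Set.Ici (lstar + 1),
        ENNReal.ofReal ((Real.sqrt (∫ u in lstar..ξ, ψ u))⁻¹) ≠ ⊤) :
    ∫⁻ ξ in Set.Ici (lstar + 1), ENNReal.ofReal (ψ ξ)⁻¹ ≠ ⊤ :=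
  A3_implies_inverse_psi_integrable_general α β hβ ν hν0 hν ψ hψ lstar hlstar_pos hlstar_root
    hlstar_unique hA3
end

section
/- Let β ≥ 0 and let ν be a measure on (0,∞) with ∫_{(0,∞)} (x ∧ x²) ν(dx) < ∞, and set ψ₀(λ) = βλ² + ∫_{(0,∞)} (e^{-λx} - 1 + λx) ν(dx) for λ ≥ 0. Then ∫_0^1 r^{-2} ψ₀(r) dr < ∞ if and only if ∫_{[1,∞)} x (log x) ν(dx) < ∞. -/
open MeasureTheory Real Set

open scoped ENNReal

/-!
With `φ(u) = e⁻ᵘ - 1 + u`, Tonelli gives `∫₀¹ r⁻² ψ₀(r) dr = β + ∫ w dν` for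
`w(x) = ∫₀¹ r⁻² φ(rx) dr` (the constant `β` only shifts an integral over a finite measure).
From `u - 1 ≤ φ(u) ≤ min(u, u²)` and a split of `(0, 1]` at `r = 1/x` one gets `w(x) ≤ x²` and
`|w(x) - x log x| ≤ x` for `x ≥ 1`, so under `∫ (x ∧ x²) dν < ∞` the integral `∫ w dν` is finite
exactly when `∫_{[1,∞)} x log x dν` is.
-/

lemma exp_neg_sub_one_add_nonneg (u : ℝ) : 0 ≤ exp (-u) - 1 + u := by
  linarith [add_one_le_exp (-u)]

lemma exp_neg_sub_one_add_le_self {u : ℝ} (hu : 0 ≤ u) : exp (-u) - 1 + u ≤ u := by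
  linarith [exp_le_one_iff.mpr (neg_nonpos.mpr hu)]

lemma exp_neg_sub_one_add_le_sq {u : ℝ} (hu : 0 ≤ u) : exp (-u) - 1 + u ≤ u ^ 2 := by
  rcases le_or_gt u 1 with hu1 | hu1
  · have h := abs_exp_sub_one_sub_id_le (x := -u) (by rwa [abs_neg, abs_of_nonneg hu])
    rw [neg_sq] at h
    linarith [le_abs_self (exp (-u) - 1 - -u)]
  · nlinarith [exp_neg_sub_one_add_le_self hu]

lemma sub_one_le_exp_neg_sub_one_add (u : ℝ) : u - 1 ≤ exp (-u) - 1 + u := by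
  linarith [exp_pos (-u)]

lemma lintegral_Ioc_ofReal_eq_intervalIntegral {f : ℝ → ℝ} {a b : ℝ} (hab : a ≤ b)
    (hf : ContinuousOn f (Icc a b)) (hf_nonneg : ∀ x ∈ Ioc a b, 0 ≤ f x) :
    ∫⁻ x in Ioc a b, ENNReal.ofReal (f x) = ENNReal.ofReal (∫ x in a..b, f x) := by
  rw [intervalIntegral.integral_of_le hab, ofReal_integral_eq_lintegral_ofReal
    (hf.integrableOn_Icc.mono_set Ioc_subset_Icc_self)
    (ae_restrict_of_forall_mem measurableSet_Ioc hf_nonneg)]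

lemma lintegral_Ioc_ofReal_inv {a b : ℝ} (ha : 0 < a) (hab : a ≤ b) :
    ∫⁻ x in Ioc a b, ENNReal.ofReal x⁻¹ = ENNReal.ofReal (log (b / a)) := by
  rw [lintegral_Ioc_ofReal_eq_intervalIntegral hab
    (continuousOn_inv₀.mono fun x hx => (ha.trans_le hx.1).ne')
    (fun x hx => inv_nonneg.mpr (ha.trans hx.1).le), integral_inv_of_pos ha (ha.trans_le hab)]

lemma lintegral_Ioc_ofReal_inv_sq {a b : ℝ} (ha : 0 < a) (hab : a ≤ b) :
    ∫⁻ x in Ioc a b, ENNReal.ofReal (x ^ 2)⁻¹ = ENNReal.ofReal (a⁻¹ - b⁻¹) := by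
  have hzpow : ∀ x : ℝ, (x ^ 2)⁻¹ = x ^ (-2 : ℤ) := fun x => by
    rw [zpow_neg, zpow_ofNat]
  have h0 : (0 : ℝ) ∉ uIcc a b := notMem_uIcc_of_lt ha (ha.trans_le hab)
  rw [lintegral_Ioc_ofReal_eq_intervalIntegral (f := fun x => (x ^ 2)⁻¹) hab
    ((continuousOn_pow 2).inv₀ fun x hx => pow_ne_zero 2 (ha.trans_le hx.1).ne')
    (fun x _ => inv_nonneg.mpr (sq_nonneg x))]
  simp_rw [hzpow]
  rw [integral_zpow (Or.inr ⟨by norm_num, h0⟩)]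
  congr 1
  norm_num
  ring

/-- The contribution of a jump of size `x` to `∫₀¹ r⁻² ψ₀(r) dr`. -/
noncomputable def jumpWeight (x : ℝ) : ℝ≥0∞ :=
  ∫⁻ r in Ioc (0 : ℝ) 1, ENNReal.ofReal ((exp (-r * x) - 1 + r * x) / r ^ 2)

section Kernel

variable {r x : ℝ}

lemma kernel_le_sq (hr : 0 < r) (hx : 0 ≤ x) : (exp (-r * x) - 1 + r * x) / r ^ 2 ≤ x ^ 2 := by
  rw [div_le_iff₀ (by positivity), neg_mul, ← mul_pow, mul_comm x]
  exact exp_neg_sub_one_add_le_sq (by positivity)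

lemma kernel_le_mul_inv (hr : 0 < r) (hx : 0 ≤ x) :
    (exp (-r * x) - 1 + r * x) / r ^ 2 ≤ x * r⁻¹ := by
  rw [div_le_iff₀ (by positivity), neg_mul]
  calc _ ≤ r * x := exp_neg_sub_one_add_le_self (by positivity)
    _ = x * r⁻¹ * r ^ 2 := by field_simp

lemma mul_inv_le_kernel_add_inv_sq (hr : 0 < r) :
    x * r⁻¹ ≤ (exp (-r * x) - 1 + r * x) / r ^ 2 + (r ^ 2)⁻¹ := by
  have h : x * r⁻¹ - (r ^ 2)⁻¹ = (r * x - 1) / r ^ 2 := by field_simp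
  have := div_le_div_of_nonneg_right (sub_one_le_exp_neg_sub_one_add (r * x)) (sq_nonneg r)
  rw [← neg_mul, ← h] at this
  linarith

end Kernel

lemma jumpWeight_le_sq {x : ℝ} (hx : 0 ≤ x) : jumpWeight x ≤ ENNReal.ofReal (x ^ 2) :=
  calc jumpWeight x ≤ ∫⁻ _ in Ioc (0 : ℝ) 1, ENNReal.ofReal (x ^ 2) :=
        setLIntegral_mono measurable_const fun r hr =>
          ENNReal.ofReal_le_ofReal (kernel_le_sq hr.1 hx)
    _ = ENNReal.ofReal (x ^ 2) := by simp

lemma jumpWeight_eq_add {x : ℝ} (hx : 1 ≤ x) : jumpWeight x =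
    (∫⁻ r in Ioc 0 x⁻¹, ENNReal.ofReal ((exp (-r * x) - 1 + r * x) / r ^ 2)) +
      ∫⁻ r in Ioc x⁻¹ 1, ENNReal.ofReal ((exp (-r * x) - 1 + r * x) / r ^ 2) := by
  rw [jumpWeight, ← Ioc_union_Ioc_eq_Ioc (inv_pos.mpr (by linarith)).le (inv_le_one_of_one_le₀ hx),
    lintegral_union measurableSet_Ioc (Ioc_disjoint_Ioc_of_le le_rfl)]

lemma lintegral_Ioc_inv_one_ofReal_mul_inv {x : ℝ} (hx : 1 ≤ x) :
    ∫⁻ r in Ioc x⁻¹ 1, ENNReal.ofReal (x * r⁻¹) = ENNReal.ofReal (x * log x) := by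
  have hx0 : 0 < x := by linarith
  simp_rw [ENNReal.ofReal_mul hx0.le]
  rw [lintegral_const_mul _ (by fun_prop), lintegral_Ioc_ofReal_inv (inv_pos.mpr hx0)
    (inv_le_one_of_one_le₀ hx), one_div, inv_inv]

lemma jumpWeight_le {x : ℝ} (hx : 1 ≤ x) :
    jumpWeight x ≤ ENNReal.ofReal (x * log x) + ENNReal.ofReal x := by
  have hx0 : 0 < x := by linarith
  rw [jumpWeight_eq_add hx, add_comm]
  gcongr
  · rw [← lintegral_Ioc_inv_one_ofReal_mul_inv hx]
    exact setLIntegral_mono (by fun_prop) fun r hr =>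
      ENNReal.ofReal_le_ofReal (kernel_le_mul_inv (by linarith [hr.1, inv_pos.mpr hx0]) hx0.le)
  · calc _ ≤ ∫⁻ _ in Ioc 0 x⁻¹, ENNReal.ofReal (x ^ 2) :=
          setLIntegral_mono measurable_const fun r hr =>
            ENNReal.ofReal_le_ofReal (kernel_le_sq hr.1 hx0.le)
      _ = ENNReal.ofReal x := by
          rw [setLIntegral_const, volume_Ioc, sub_zero, ← ENNReal.ofReal_mul (sq_nonneg x)]
          congr 1
          field_simp

lemma mul_log_le_jumpWeight_add {x : ℝ} (hx : 1 ≤ x) :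
    ENNReal.ofReal (x * log x) ≤ jumpWeight x + ENNReal.ofReal x := by
  have hx0 : 0 < x := by linarith
  have hx1 : x⁻¹ ≤ 1 := inv_le_one_of_one_le₀ hx
  calc ENNReal.ofReal (x * log x) = ∫⁻ r in Ioc x⁻¹ 1, ENNReal.ofReal (x * r⁻¹) :=
        (lintegral_Ioc_inv_one_ofReal_mul_inv hx).symm
    _ ≤ ∫⁻ r in Ioc x⁻¹ 1, (ENNReal.ofReal ((exp (-r * x) - 1 + r * x) / r ^ 2) +
          ENNReal.ofReal (r ^ 2)⁻¹) :=
        setLIntegral_mono (by fun_prop) fun r hr =>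
          (ENNReal.ofReal_le_ofReal (mul_inv_le_kernel_add_inv_sq
            (by linarith [hr.1, inv_pos.mpr hx0]))).trans ENNReal.ofReal_add_le
    _ = (∫⁻ r in Ioc x⁻¹ 1, ENNReal.ofReal ((exp (-r * x) - 1 + r * x) / r ^ 2)) +
          ENNReal.ofReal (x - 1) := by
        rw [lintegral_add_right _ (by fun_prop), lintegral_Ioc_ofReal_inv_sq (inv_pos.mpr hx0) hx1,
          inv_inv, inv_one]
    _ ≤ jumpWeight x + ENNReal.ofReal x := by
        gcongr
        · exact lintegral_mono_set (Ioc_subset_Ioc (inv_pos.mpr hx0).le le_rfl)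
        · linarith

lemma sFinite_of_lintegral_ne_top {α : Type*} [MeasurableSpace α] {μ : Measure α}
    {f : α → ℝ≥0∞} (hf : AEMeasurable f μ) (hf_ne_zero : ∀ᵐ x ∂μ, f x ≠ 0)
    (hf_int : ∫⁻ x, f x ∂μ ≠ ⊤) : SFinite μ := by
  have := isFiniteMeasure_withDensity hf_int
  rw [← withDensity_inv_same₀ hf hf_ne_zero (ae_lt_top' hf hf_int).ne_of_lt]
  infer_instance

lemma lintegral_ofReal_const_add_ne_top_iff {α : Type*} [MeasurableSpace α] {μ : Measure α}
    [IsFiniteMeasure μ] (c : ℝ) (f : α → ℝ) :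
    ∫⁻ x, ENNReal.ofReal (c + f x) ∂μ ≠ ⊤ ↔ ∫⁻ x, ENNReal.ofReal (f x) ∂μ ≠ ⊤ := by
  have hbound (c : ℝ) (g : α → ℝ) :
      ∫⁻ x, ENNReal.ofReal (c + g x) ∂μ ≤
        ENNReal.ofReal c * μ univ + ∫⁻ x, ENNReal.ofReal (g x) ∂μ := by
    rw [← lintegral_const, ← lintegral_add_left measurable_const]
    exact lintegral_mono fun x => ENNReal.ofReal_add_le
  have hfinite (c : ℝ) : ENNReal.ofReal c * μ univ ≠ ⊤ :=
    ENNReal.mul_ne_top ENNReal.ofReal_ne_top (measure_ne_top μ univ)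
  refine ⟨fun h => ne_top_of_le_ne_top (ENNReal.add_ne_top.2 ⟨hfinite (-c), h⟩) ?_,
    fun h => ne_top_of_le_ne_top (ENNReal.add_ne_top.2 ⟨hfinite c, h⟩) (hbound c f)⟩
  simpa using hbound (-c) (fun x => c + f x)

section LevyMeasure

variable {ν : Measure ℝ}

lemma integrable_exp_neg_mul_sub_one_add (hν_pos : ∀ᵐ x ∂ν, 0 < x)
    (hν : ∫⁻ x, ENNReal.ofReal (min x (x ^ 2)) ∂ν ≠ ⊤) {r : ℝ} (hr0 : 0 ≤ r) (hr1 : r ≤ 1) :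
    Integrable (fun x => exp (-r * x) - 1 + r * x) ν := by
  refine ⟨by fun_prop, ?_⟩
  rw [hasFiniteIntegral_iff_ofReal (ae_of_all _ fun x => by
    simpa [neg_mul] using exp_neg_sub_one_add_nonneg (r * x))]
  refine (lintegral_mono_ae ?_).trans_lt hν.lt_top
  filter_upwards [hν_pos] with x hx
  have hu : 0 ≤ r * x := by positivity
  have hrx : r * x ≤ x := mul_le_of_le_one_left hx.le hr1
  rw [neg_mul]
  exact ENNReal.ofReal_le_ofReal (le_min ((exp_neg_sub_one_add_le_self hu).trans hrx)
    ((exp_neg_sub_one_add_le_sq hu).trans (pow_le_pow_left₀ hu hrx 2)))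

lemma lintegral_ofReal_integral_div_sq_eq_lintegral_jumpWeight (hν_pos : ∀ᵐ x ∂ν, 0 < x)
    (hν : ∫⁻ x, ENNReal.ofReal (min x (x ^ 2)) ∂ν ≠ ⊤) :
    ∫⁻ r in Ioc (0 : ℝ) 1, ENNReal.ofReal ((∫ x, (exp (-r * x) - 1 + r * x) ∂ν) / r ^ 2) =
      ∫⁻ x, jumpWeight x ∂ν := by
  have : SFinite ν := sFinite_of_lintegral_ne_top (by fun_prop)
    (hν_pos.mono fun x hx => (ENNReal.ofReal_pos.2 (lt_min hx (by positivity))).ne') hν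
  have hpointwise : ∀ r ∈ Ioc (0 : ℝ) 1,
      ENNReal.ofReal ((∫ x, (exp (-r * x) - 1 + r * x) ∂ν) / r ^ 2) =
        ∫⁻ x, ENNReal.ofReal ((exp (-r * x) - 1 + r * x) / r ^ 2) ∂ν := fun r hr => by
    rw [← integral_div, ofReal_integral_eq_lintegral_ofReal
      ((integrable_exp_neg_mul_sub_one_add hν_pos hν hr.1.le hr.2).div_const _)
      (ae_of_all _ fun x => div_nonneg (by simpa [neg_mul] using exp_neg_sub_one_add_nonneg (r * x))
        (sq_nonneg r))]
  rw [setLIntegral_congr_fun measurableSet_Ioc hpointwise]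
  exact lintegral_lintegral_swap (by fun_prop)

lemma lintegral_jumpWeight_ne_top_iff (hν_pos : ∀ᵐ x ∂ν, 0 < x)
    (hν : ∫⁻ x, ENNReal.ofReal (min x (x ^ 2)) ∂ν ≠ ⊤) :
    ∫⁻ x, jumpWeight x ∂ν ≠ ⊤ ↔ ∫⁻ x in Ici 1, ENNReal.ofReal (x * log x) ∂ν ≠ ⊤ := by
  have hsmall : ∫⁻ x in Iio 1, jumpWeight x ∂ν ≠ ⊤ := by
    refine ne_top_of_le_ne_top (ne_top_of_le_ne_top hν (setLIntegral_le_lintegral (Iio 1) _)) ?_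
    refine setLIntegral_mono_ae (by fun_prop) ?_
    filter_upwards [hν_pos] with x hx hx1
    rw [min_eq_right (by nlinarith [mem_Iio.1 hx1])]
    exact jumpWeight_le_sq hx.le
  have hlinear : ∫⁻ x in Ici 1, ENNReal.ofReal x ∂ν ≠ ⊤ := by
    refine ne_top_of_le_ne_top (ne_top_of_le_ne_top hν (setLIntegral_le_lintegral (Ici 1) _)) ?_
    refine setLIntegral_mono (by fun_prop) fun x hx => ?_
    rw [min_eq_left (by nlinarith [mem_Ici.1 hx])]
  have hupper : ∫⁻ x in Ici 1, jumpWeight x ∂ν ≤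
      ∫⁻ x in Ici 1, ENNReal.ofReal (x * log x) ∂ν + ∫⁻ x in Ici 1, ENNReal.ofReal x ∂ν := by
    rw [← lintegral_add_right _ (by fun_prop)]
    exact setLIntegral_mono' measurableSet_Ici fun x hx => jumpWeight_le hx
  have hlower : ∫⁻ x in Ici 1, ENNReal.ofReal (x * log x) ∂ν ≤
      ∫⁻ x in Ici 1, jumpWeight x ∂ν + ∫⁻ x in Ici 1, ENNReal.ofReal x ∂ν := by
    rw [← lintegral_add_right _ (by fun_prop)]
    exact setLIntegral_mono' measurableSet_Ici fun x hx => mul_log_le_jumpWeight_add hx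
  rw [← lintegral_add_compl _ measurableSet_Ici, compl_Ici, ENNReal.add_ne_top,
    and_iff_left hsmall]
  exact ⟨fun h => ne_top_of_le_ne_top (ENNReal.add_ne_top.2 ⟨h, hlinear⟩) hlower,
    fun h => ne_top_of_le_ne_top (ENNReal.add_ne_top.2 ⟨h, hlinear⟩) hupper⟩

end LevyMeasure

theorem xlogx_moment_iff_general
    (β : ℝ)
    (ν : Measure ℝ) (hν0 : ν (Set.Iic 0) = 0)
    (hν : ∫⁻ x, ENNReal.ofReal (min x (x ^ 2)) ∂ν ≠ ⊤)
    (ψ₀ : ℝ → ℝ)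
    (hψ₀ : ∀ l : ℝ, ψ₀ l = β * l ^ 2 + ∫ x, (Real.exp (-l * x) - 1 + l * x) ∂ν) :
    (∫⁻ r in Set.Ioc (0 : ℝ) 1, ENNReal.ofReal (ψ₀ r / r ^ 2) ≠ ⊤) ↔
    (∫⁻ x in Set.Ici (1 : ℝ), ENNReal.ofReal (x * Real.log x) ∂ν ≠ ⊤) := by
  have hν_pos : ∀ᵐ x ∂ν, 0 < x := by
    simpa using measure_eq_zero_iff_ae_notMem.1 hν0
  have hψ₀_div : ∀ r ∈ Ioc (0 : ℝ) 1, ENNReal.ofReal (ψ₀ r / r ^ 2) =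
      ENNReal.ofReal (β + (∫ x, (exp (-r * x) - 1 + r * x) ∂ν) / r ^ 2) := fun r hr => by
    rw [hψ₀, add_div, mul_div_cancel_right₀ _ (pow_ne_zero 2 hr.1.ne')]
  have : IsFiniteMeasure (volume.restrict (Ioc (0 : ℝ) 1)) :=
    isFiniteMeasure_restrict.2 measure_Ioc_lt_top.ne
  rw [setLIntegral_congr_fun measurableSet_Ioc hψ₀_div, lintegral_ofReal_const_add_ne_top_iff,
    lintegral_ofReal_integral_div_sq_eq_lintegral_jumpWeight hν_pos hν]
  exact lintegral_jumpWeight_ne_top_iff hν_pos hν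

/-- With `ψ₀(λ) = βλ² + ∫_{(0,∞)} (e^{-λx} - 1 + λx) ν(dx)`,
`∫_0^1 r^{-2} ψ₀(r) dr < ∞` if and only if `∫_{[1,∞)} x log x ν(dx) < ∞`. -/
theorem xlogx_moment_iff
    (β : ℝ) (hβ : 0 ≤ β)
    (ν : Measure ℝ) (hν0 : ν (Set.Iic 0) = 0)
    (hν : ∫⁻ x, ENNReal.ofReal (min x (x ^ 2)) ∂ν ≠ ⊤)
    (ψ₀ : ℝ → ℝ)
    (hψ₀ : ∀ l : ℝ, ψ₀ l = β * l ^ 2 + ∫ x, (Real.exp (-l * x) - 1 + l * x) ∂ν) :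
    (∫⁻ r in Set.Ioc (0 : ℝ) 1, ENNReal.ofReal (ψ₀ r / r ^ 2) ≠ ⊤) ↔
    (∫⁻ x in Set.Ici (1 : ℝ), ENNReal.ofReal (x * Real.log x) ∂ν ≠ ⊤) :=
  xlogx_moment_iff_general β ν hν0 hν ψ₀ hψ₀
end

section
/- Define ψ₂(λ) = λ (λ log λ - λ + 1) / (log λ)² for λ ∈ (0,1). Then (a) ∫_2^∞ (∫_2^ξ g(u) du)^{-1/2} dξ < ∞, where g(u) = u (u log u - u + 1)/(log u)² for u > 1; (b) ∫_0^{1/2} r^{-2} ψ₂(r) dr < ∞; and (c) ∫_0^{1/2} r^{-2} |log r| ψ₂(r) dr = ∞. -/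
/-!
With `klFun x = x log x + 1 - x`, both `ψ₂` (on `(0, 1)`) and `g` (on `(1, ∞)`) are
`psiTwo x = x klFun x / (log x)²`.

(a) For `u > 1`, `klFun u ≥ (log u)² / 2` gives `g u ≥ u / 2`, so `∫₂^ξ g ≥ ξ - 2`; for `u ≥ 8`,
`klFun u ≥ u` and `log u ≤ 4 u^{1/4}` give `g u ≥ u^{3/2} / 16`, so `∫₂^ξ g ≥ (ξ/2)^{5/2} / 16`
once `ξ ≥ 16`. The integrand is thus `O((ξ - 2)^{-1/2})` near `2` and `O(ξ^{-5/4})` at infinity.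

(b) On `(0, 1)`, `klFun ≤ 1`, so `ψ₂ r / r² ≤ 1 / (r (log r)²)`, the derivative of `-1 / log r`,
which is continuous at `0`.

(c) `klFun` decreases on `[0, 1]`, so `|log r| ψ₂ r / r² = klFun r / (r |log r|)` is at least
`klFun (1/2) / |r log r|` on `(0, 1/2]`, and `1 / (r log r)` is the derivative of `log |log r|`,
which is unbounded at `0`.
-/

open MeasureTheory Real Set Filter Topology InformationTheory

section SetLIntegral

variable {α : Type*} [MeasurableSpace α] {μ : Measure α} {s : Set α} {f h : α → ℝ}

theorem setLIntegral_ofReal_ne_top_of_le (hs : MeasurableSet s) (hh : IntegrableOn h s μ)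
    (hfh : ∀ x ∈ s, f x ≤ h x) : ∫⁻ x in s, ENNReal.ofReal (f x) ∂μ ≠ ⊤ :=
  ((setLIntegral_mono' hs fun x hx => ENNReal.ofReal_le_ofReal (hfh x hx)).trans_lt
    hh.lintegral_lt_top).ne

theorem setLIntegral_ofReal_eq_top_of_le {c : ℝ} (hs : MeasurableSet s) (hc : 0 < c)
    (hmeas : AEStronglyMeasurable h (μ.restrict s)) (hh : ¬IntegrableOn h s μ)
    (hhf : ∀ x ∈ s, c * ‖h x‖ ≤ f x) : ∫⁻ x in s, ENNReal.ofReal (f x) ∂μ = ⊤ := by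
  have h_top : ∫⁻ x in s, ‖h x‖ₑ ∂μ = ⊤ := by
    by_contra hne
    exact hh ⟨hmeas, lt_top_iff_ne_top.2 hne⟩
  refine eq_top_iff.2 ?_
  calc ⊤ = ENNReal.ofReal c * ∫⁻ x in s, ‖h x‖ₑ ∂μ := by
        rw [h_top, ENNReal.mul_top (by simpa using hc)]
    _ = ∫⁻ x in s, ENNReal.ofReal (c * ‖h x‖) ∂μ := by
        rw [← lintegral_const_mul' _ _ ENNReal.ofReal_ne_top]
        congr with x
        rw [ENNReal.ofReal_mul hc.le, ofReal_norm]
    _ ≤ _ := setLIntegral_mono' hs fun x hx => ENNReal.ofReal_le_ofReal (hhf x hx)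

end SetLIntegral

theorem continuousAt_inv_log_zero : ContinuousAt (fun x => (log x)⁻¹) 0 := by
  rw [← continuousWithinAt_compl_self, ContinuousWithinAt, log_zero, inv_zero]
  exact tendsto_log_nhdsNE_zero.inv_tendsto_atBot

theorem integrableOn_Ioc_inv_mul_log_sq {b : ℝ} (hb : b < 1) :
    IntegrableOn (fun x => (x * log x ^ 2)⁻¹) (Ioc 0 b) := by
  refine intervalIntegral.integrableOn_deriv_of_nonneg (g := fun x => -(log x)⁻¹) ?_ ?_ ?_
  · intro x hx
    rcases hx.1.eq_or_lt with rfl | hx0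
    · exact continuousAt_inv_log_zero.neg.continuousWithinAt
    · exact ((continuousAt_log hx0.ne').inv₀ (log_neg hx0 (hx.2.trans_lt hb)).ne).neg
        |>.continuousWithinAt
  · intro x hx
    have hlog : log x ≠ 0 := (log_neg hx.1 (hx.2.trans hb)).ne
    exact ((hasDerivAt_log hx.1.ne').inv hlog).neg.congr_deriv (by field_simp)
  · exact fun x hx => inv_nonneg.2 (mul_nonneg hx.1.le (sq_nonneg _))

theorem not_integrableOn_Ioc_inv_mul_log {b : ℝ} (hb : 0 < b) :
    ¬IntegrableOn (fun x => (x * log x)⁻¹) (Ioc 0 b) := by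
  have hderiv : ∀ᶠ x in 𝓝[>] 0, HasDerivAt (fun x => log (log x)) (x * log x)⁻¹ x := by
    filter_upwards [Ioo_mem_nhdsGT one_pos] with x hx
    convert (hasDerivAt_log hx.1.ne').log (log_neg hx.1 hx.2).ne using 1
    field_simp
  have hlim : Tendsto (fun x => log (log x)) (𝓝[>] 0) atTop := by
    simpa only [Function.comp_def, log_neg_eq_log] using
      tendsto_log_atTop.comp (tendsto_neg_atBot_atTop.comp tendsto_log_nhdsGT_zero)
  exact not_integrableOn_of_tendsto_norm_atTop_of_deriv_isBigO_filter (𝓝[>] 0)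
    (Ioc_mem_nhdsGT hb) (hderiv.mono fun x hx => hx.differentiableAt)
    (tendsto_norm_atTop_atTop.comp hlim)
    (EventuallyEq.isBigO (hderiv.mono fun x hx => hx.deriv))

theorem half_sq_log_le_klFun {x : ℝ} (hx : 1 ≤ x) : log x ^ 2 / 2 ≤ klFun x := by
  have hmono : MonotoneOn (fun x => klFun x - log x ^ 2 / 2) (Ici 1) := by
    refine monotoneOn_of_hasDerivWithinAt_nonneg (f' := fun x => log x * (1 - x⁻¹))
      (convex_Ici 1) ?_ ?_ ?_
    · refine continuous_klFun.continuousOn.sub ((ContinuousOn.pow ?_ 2).div_const 2)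
      exact continuousOn_log.mono fun x hx => (zero_lt_one.trans_le hx).ne'
    · intro x hx
      rw [interior_Ici] at hx
      have hx0 : x ≠ 0 := (zero_lt_one.trans hx).ne'
      refine ((hasDerivAt_klFun hx0).sub
        (((hasDerivAt_log hx0).pow 2).div_const 2)).hasDerivWithinAt.congr_deriv ?_
      field_simp
      ring
    · intro x hx
      rw [interior_Ici] at hx
      exact mul_nonneg (log_nonneg hx.le) (sub_nonneg.2 (inv_le_one_of_one_le₀ hx.le))
  simpa [klFun_one] using hmono self_mem_Ici hx hx

theorem antitoneOn_klFun : AntitoneOn klFun (Icc 0 1) := by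
  refine antitoneOn_of_deriv_nonpos (convex_Icc 0 1) continuous_klFun.continuousOn
    (fun x hx => (hasDerivAt_klFun ?_).differentiableAt.differentiableWithinAt) fun x hx => ?_
  · rw [interior_Icc] at hx
    exact hx.1.ne'
  · rw [interior_Icc] at hx
    rw [deriv_klFun]
    exact log_nonpos hx.1.le hx.2.le

theorem klFun_half_pos : 0 < klFun (1 / 2) :=
  (klFun_nonneg one_half_pos.le).lt_of_ne' fun h => by norm_num [klFun_eq_zero_iff] at h

noncomputable def psiTwo (x : ℝ) : ℝ := x * klFun x / log x ^ 2

theorem psiTwo_div_sq_le {x : ℝ} (hx0 : 0 < x) (hx1 : x < 1) :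
    psiTwo x / x ^ 2 ≤ (x * log x ^ 2)⁻¹ := by
  have hlog := log_neg hx0 hx1
  have hkl : klFun x ≤ 1 := by
    rw [klFun_apply]
    nlinarith [mul_neg_of_pos_of_neg hx0 hlog]
  calc psiTwo x / x ^ 2 = klFun x * (x * log x ^ 2)⁻¹ := by
        rw [psiTwo]
        field_simp
    _ ≤ (x * log x ^ 2)⁻¹ := mul_le_of_le_one_left (by positivity) hkl

theorem klFun_half_mul_le_abs_log_mul_psiTwo_div_sq {x : ℝ} (hx0 : 0 < x) (hx : x ≤ 1 / 2) :
    klFun (1 / 2) * ‖(x * log x)⁻¹‖ ≤ |log x| * psiTwo x / x ^ 2 := by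
  have hlog := log_neg hx0 (by linarith)
  calc klFun (1 / 2) * ‖(x * log x)⁻¹‖ ≤ klFun x * ‖(x * log x)⁻¹‖ := by
        gcongr
        exact antitoneOn_klFun ⟨hx0.le, by linarith⟩ ⟨by norm_num, by norm_num⟩ hx
    _ = |log x| * psiTwo x / x ^ 2 := by
        rw [psiTwo, norm_inv, norm_mul, Real.norm_of_nonneg hx0.le, Real.norm_eq_abs,
          abs_of_neg hlog]
        field_simp

theorem half_le_psiTwo {x : ℝ} (hx : 1 < x) : x / 2 ≤ psiTwo x := by
  have hlog : 0 < log x ^ 2 := pow_pos (log_pos hx) 2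
  rw [psiTwo, le_div_iff₀ hlog]
  calc x / 2 * log x ^ 2 = x * (log x ^ 2 / 2) := by ring
    _ ≤ x * klFun x := by gcongr; exact half_sq_log_le_klFun hx.le

theorem rpow_div_le_psiTwo {x : ℝ} (hx : 8 ≤ x) : x ^ (3 / 2 : ℝ) / 16 ≤ psiTwo x := by
  have hx0 : 0 < x := by linarith
  have hlog : 2 ≤ log x := by
    rw [le_log_iff_exp_le hx0, show (2 : ℝ) = 1 + 1 by norm_num, exp_add]
    nlinarith [exp_one_lt_d9, exp_pos 1]
  have hkl : x ≤ klFun x := by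
    rw [klFun_apply]
    nlinarith
  have hlog_sq : log x ^ 2 ≤ 16 * x ^ (1 / 2 : ℝ) :=
    calc log x ^ 2 ≤ (4 * x ^ (1 / 4 : ℝ)) ^ 2 := by
          gcongr
          have := log_le_rpow_div hx0.le (by norm_num : (0 : ℝ) < 1 / 4)
          linarith
      _ = 16 * x ^ (1 / 2 : ℝ) := by
          rw [mul_pow, ← rpow_mul_natCast hx0.le]
          norm_num
  have hpow : x ^ (3 / 2 : ℝ) * x ^ (1 / 2 : ℝ) = x * x := by
    rw [← rpow_add hx0, show (3 / 2 + 1 / 2 : ℝ) = 2 by norm_num, rpow_two, sq]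
  calc x ^ (3 / 2 : ℝ) / 16 = x * x / (16 * x ^ (1 / 2 : ℝ)) := by
        rw [← hpow]
        field_simp
    _ ≤ x * klFun x / log x ^ 2 :=
        div_le_div₀ (by nlinarith) (by gcongr) (by positivity) hlog_sq

theorem continuousOn_psiTwo : ContinuousOn psiTwo (Ioi 1) := fun _ hx =>
  ((continuousAt_id.mul continuous_klFun.continuousAt).div
    ((continuousAt_log (zero_lt_one.trans hx).ne').pow 2)
    (pow_pos (log_pos hx) 2).ne').continuousWithinAt

theorem intervalIntegrable_psiTwo {a b : ℝ} (ha : 1 < a) (hb : 1 < b) :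
    IntervalIntegrable psiTwo volume a b :=
  (continuousOn_psiTwo.mono fun _ hx => lt_of_lt_of_le (lt_min ha hb) hx.1).intervalIntegrable

theorem sub_le_integral_psiTwo {b : ℝ} (hb : 2 ≤ b) : b - 2 ≤ ∫ u in 2..b, psiTwo u := by
  simpa using intervalIntegral.integral_mono_on hb (intervalIntegrable_const (c := (1 : ℝ)))
    (intervalIntegrable_psiTwo one_lt_two (by linarith)) fun u hu => by
      linarith [half_le_psiTwo (show 1 < u by linarith [hu.1]), hu.1]

theorem rpow_le_integral_psiTwo {b : ℝ} (hb : 16 ≤ b) :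
    (b / 2) ^ (5 / 2 : ℝ) / 16 ≤ ∫ u in 2..b, psiTwo u := by
  have hb2 : 0 < b / 2 := by linarith
  have hleft : 0 ≤ ∫ u in 2..b / 2, psiTwo u :=
    intervalIntegral.integral_nonneg (show 2 ≤ b / 2 by linarith) fun u hu =>
      (by linarith [hu.1] : (0 : ℝ) ≤ u / 2).trans (half_le_psiTwo (by linarith [hu.1]))
  have hright : b / 2 * (b / 2) ^ (3 / 2 : ℝ) / 16 ≤ ∫ u in b / 2..b, psiTwo u := by
    have := intervalIntegral.integral_mono_on (show b / 2 ≤ b by linarith)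
      (intervalIntegrable_const (c := (b / 2) ^ (3 / 2 : ℝ) / 16))
      (intervalIntegrable_psiTwo (by linarith) (by linarith)) fun u hu =>
        (by gcongr; exact hu.1 : (b / 2) ^ (3 / 2 : ℝ) / 16 ≤ u ^ (3 / 2 : ℝ) / 16).trans
          (rpow_div_le_psiTwo (by linarith [hu.1]))
    simpa [show b - b / 2 = b / 2 by ring] using this
  rw [← intervalIntegral.integral_add_adjacent_intervals (b := b / 2)
    (intervalIntegrable_psiTwo one_lt_two (by linarith))
    (intervalIntegrable_psiTwo (by linarith) (by linarith))]
  calc (b / 2) ^ (5 / 2 : ℝ) / 16 = b / 2 * (b / 2) ^ (3 / 2 : ℝ) / 16 := by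
        rw [show (5 / 2 : ℝ) = 1 + 3 / 2 by norm_num, rpow_add hb2, rpow_one]
    _ ≤ _ := by linarith

theorem inv_sqrt_integral_psiTwo_le_of_lt {ξ : ℝ} (hξ : 2 < ξ) :
    (√(∫ u in 2..ξ, psiTwo u))⁻¹ ≤ (ξ - 2) ^ (-(1 / 2) : ℝ) := by
  have hξ2 : 0 < ξ - 2 := by linarith
  rw [rpow_neg hξ2.le, ← sqrt_eq_rpow]
  exact inv_anti₀ (sqrt_pos.2 hξ2) (sqrt_le_sqrt (sub_le_integral_psiTwo hξ.le))

theorem inv_sqrt_integral_psiTwo_le_of_le {ξ : ℝ} (hξ : 16 ≤ ξ) :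
    (√(∫ u in 2..ξ, psiTwo u))⁻¹ ≤ 4 * (ξ ^ (-(5 / 4) : ℝ) / 2 ^ (-(5 / 4) : ℝ)) := by
  have hξ2 : 0 < ξ / 2 := by linarith
  have hsqrt : (ξ / 2) ^ (5 / 4 : ℝ) / 4 ≤ √(∫ u in 2..ξ, psiTwo u) := by
    refine (le_sqrt' (by positivity)).2 ((le_of_eq ?_).trans (rpow_le_integral_psiTwo hξ))
    rw [div_pow, ← rpow_mul_natCast hξ2.le]
    norm_num
  calc (√(∫ u in 2..ξ, psiTwo u))⁻¹ ≤ ((ξ / 2) ^ (5 / 4 : ℝ) / 4)⁻¹ :=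
        inv_anti₀ (by positivity) hsqrt
    _ = 4 * (ξ ^ (-(5 / 4) : ℝ) / 2 ^ (-(5 / 4) : ℝ)) := by
        rw [← div_rpow (by linarith) zero_le_two, rpow_neg hξ2.le]
        field_simp

theorem lintegral_inv_sqrt_integral_psiTwo_ne_top :
    ∫⁻ ξ in Ioi 2, ENNReal.ofReal (√(∫ u in 2..ξ, psiTwo u))⁻¹ ≠ ⊤ := by
  have hnear : IntegrableOn (fun ξ : ℝ => (ξ - 2) ^ (-(1 / 2) : ℝ)) (Ioc 2 16) := by
    have := ((intervalIntegral.intervalIntegrable_rpow' (a := 0) (b := 14)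
      (r := -(1 / 2)) (by norm_num)).comp_sub_right 2).1
    norm_num at this
    exact this
  have htail : IntegrableOn (fun ξ : ℝ => 4 * (ξ ^ (-(5 / 4) : ℝ) / 2 ^ (-(5 / 4) : ℝ))) (Ioi 16) :=
    ((integrableOn_Ioi_rpow_of_lt (by norm_num) (by norm_num)).div_const _).const_mul 4
  rw [← Ioc_union_Ioi_eq_Ioi (by norm_num : (2 : ℝ) ≤ 16),
    lintegral_union measurableSet_Ioi Ioc_disjoint_Ioi_same]
  exact ENNReal.add_ne_top.2
    ⟨setLIntegral_ofReal_ne_top_of_le measurableSet_Ioc hnear fun ξ hξ =>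
      inv_sqrt_integral_psiTwo_le_of_lt hξ.1,
    setLIntegral_ofReal_ne_top_of_le measurableSet_Ioi htail fun ξ hξ =>
      inv_sqrt_integral_psiTwo_le_of_le (le_of_lt hξ)⟩

/-- For `ψ₂(λ) = λ(λ log λ - λ + 1)/(log λ)²` on `(0,1)` and
`g(u) = u(u log u - u + 1)/(log u)²` on `(1,∞)`:
(a) `∫_2^∞ (∫_2^ξ g(u) du)^{-1/2} dξ < ∞`;
(b) `∫_0^{1/2} r^{-2} ψ₂(r) dr < ∞`;
(c) `∫_0^{1/2} r^{-2} |log r| ψ₂(r) dr = ∞`. -/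
theorem example_psi_two
    (ψ₂ g : ℝ → ℝ)
    (hψ₂ : ∀ l : ℝ, 0 < l → l < 1 →
      ψ₂ l = l * (l * Real.log l - l + 1) / (Real.log l) ^ 2)
    (hg : ∀ u : ℝ, 1 < u →
      g u = u * (u * Real.log u - u + 1) / (Real.log u) ^ 2) :
    (∫⁻ ξ in Set.Ici (2 : ℝ),
        ENNReal.ofReal ((Real.sqrt (∫ u in (2 : ℝ)..ξ, g u))⁻¹) ≠ ⊤) ∧
    (∫⁻ r in Set.Ioc (0 : ℝ) (1 / 2), ENNReal.ofReal (ψ₂ r / r ^ 2) ≠ ⊤) ∧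
    (∫⁻ r in Set.Ioc (0 : ℝ) (1 / 2),
        ENNReal.ofReal (|Real.log r| * ψ₂ r / r ^ 2) = ⊤) := by
  have hψ : EqOn ψ₂ psiTwo (Ioc 0 (1 / 2)) := fun r hr => by
    rw [hψ₂ r hr.1 (by linarith [hr.2]), psiTwo, klFun_apply]
    ring
  have hG : ∀ ξ : ℝ, 2 < ξ → ∫ u in 2..ξ, g u = ∫ u in 2..ξ, psiTwo u :=
    fun ξ hξ => intervalIntegral.integral_congr fun u hu => by
      have hu1 : 1 < u := by linarith [(uIcc_of_le hξ.le ▸ hu).1]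
      rw [hg u hu1, psiTwo, klFun_apply]
      ring
  refine ⟨?_, ?_, ?_⟩
  · rw [setLIntegral_congr Ioi_ae_eq_Ici.symm,
      setLIntegral_congr_fun measurableSet_Ioi fun ξ hξ => by rw [hG ξ hξ]]
    exact lintegral_inv_sqrt_integral_psiTwo_ne_top
  · rw [setLIntegral_congr_fun measurableSet_Ioc fun r hr => by rw [hψ hr]]
    exact setLIntegral_ofReal_ne_top_of_le measurableSet_Ioc
      (integrableOn_Ioc_inv_mul_log_sq (by norm_num)) fun r hr =>
        psiTwo_div_sq_le hr.1 (by linarith [hr.2])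
  · rw [setLIntegral_congr_fun measurableSet_Ioc fun r hr => by rw [hψ hr]]
    exact setLIntegral_ofReal_eq_top_of_le measurableSet_Ioc klFun_half_pos
      (by fun_prop) (not_integrableOn_Ioc_inv_mul_log one_half_pos) fun r hr =>
        klFun_half_mul_le_abs_log_mul_psiTwo_div_sq hr.1 hr.2
end

section
/- Let d > 0, c > 0 and 0 < λ ≤ c. Then lim_{t→∞} e^{(λc - λ²/2) t} ∫_t^∞ (d / √(2π s³)) · exp(-(d - c s)² / (2s)) ds = 0. -/
/-!
The tail of the first-passage density is dominated by a pure exponential: for `s ≥ t > 0`,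
completing the square gives `-(d - c s)² / (2s) ≤ d c - c² s / 2`, so the density on `(t, ∞)` is at
most `d e^{dc} / √(2π t³) · e^{-c² s / 2}` and its tail integral is `O(t^{-3/2} e^{-c² t / 2})`.
Since `λ c - λ² / 2 ≤ c² / 2` for every `λ`, the exponential prefactor cannot beat this decay, and
what remains is the factor `t^{-3/2} → 0`.
-/

open MeasureTheory Real Set Filter

noncomputable def firstPassageDensity (d c s : ℝ) : ℝ :=
  d / √(2 * π * s ^ 3) * exp (-(d - c * s) ^ 2 / (2 * s))

lemma firstPassageDensity_nonneg {d : ℝ} (hd : 0 ≤ d) (c s : ℝ) :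
    0 ≤ firstPassageDensity d c s := by
  unfold firstPassageDensity
  positivity

lemma neg_sq_sub_mul_div_le (d c : ℝ) {s : ℝ} (hs : 0 < s) :
    -(d - c * s) ^ 2 / (2 * s) ≤ d * c + -(c ^ 2 / 2) * s := by
  rw [div_le_iff₀ (by positivity)]
  nlinarith [sq_nonneg d]

lemma firstPassageDensity_le {d : ℝ} (hd : 0 ≤ d) (c : ℝ) {t s : ℝ} (ht : 0 < t) (hts : t ≤ s) :
    firstPassageDensity d c s ≤ d * exp (d * c) / √(2 * π * t ^ 3) * exp (-(c ^ 2 / 2) * s) := by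
  have hprefactor : d / √(2 * π * s ^ 3) ≤ d / √(2 * π * t ^ 3) := by gcongr
  have hexp : exp (-(d - c * s) ^ 2 / (2 * s)) ≤ exp (d * c) * exp (-(c ^ 2 / 2) * s) := by
    rw [← exp_add]
    exact exp_le_exp.mpr (neg_sq_sub_mul_div_le d c (ht.trans_le hts))
  calc firstPassageDensity d c s
      ≤ d / √(2 * π * t ^ 3) * (exp (d * c) * exp (-(c ^ 2 / 2) * s)) :=
        mul_le_mul hprefactor hexp (exp_pos _).le (by positivity)
    _ = d * exp (d * c) / √(2 * π * t ^ 3) * exp (-(c ^ 2 / 2) * s) := by ring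

lemma setIntegral_Ioi_le_of_le_mul_exp {f : ℝ → ℝ} {t K a : ℝ} (ha : a < 0)
    (hf_nonneg : ∀ s ∈ Ioi t, 0 ≤ f s) (hf_le : ∀ s ∈ Ioi t, f s ≤ K * exp (a * s)) :
    ∫ s in Ioi t, f s ≤ K * (-exp (a * t) / a) := by
  rw [← integral_exp_mul_Ioi ha, ← integral_const_mul]
  refine integral_mono_of_nonneg ?_ ((integrableOn_exp_mul_Ioi ha t).const_mul K) ?_
  · filter_upwards [ae_restrict_mem measurableSet_Ioi] with s hs using hf_nonneg s hs
  · filter_upwards [ae_restrict_mem measurableSet_Ioi] with s hs using hf_le s hs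

lemma integral_firstPassageDensity_Ioi_le {d c t : ℝ} (hd : 0 ≤ d) (hc : c ≠ 0) (ht : 0 < t) :
    ∫ s in Ioi t, firstPassageDensity d c s ≤
      d * exp (d * c) / √(2 * π * t ^ 3) * (exp (-(c ^ 2 / 2) * t) / (c ^ 2 / 2)) := by
  have ha : -(c ^ 2 / 2) < 0 := neg_neg_of_pos (by positivity)
  convert setIntegral_Ioi_le_of_le_mul_exp ha (fun s _ ↦ firstPassageDensity_nonneg hd c s)
    (fun s hs ↦ firstPassageDensity_le hd c ht (le_of_lt hs)) using 2
  ring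

lemma mul_sub_sq_div_two_le_sq_div_two (lam c : ℝ) : lam * c - lam ^ 2 / 2 ≤ c ^ 2 / 2 := by
  nlinarith [sq_nonneg (c - lam)]

theorem first_passage_tail_vanishes_general
    (d c lam : ℝ) (hd : 0 < d) (hc : 0 < c) :
    Tendsto (fun t : ℝ =>
        Real.exp ((lam * c - lam ^ 2 / 2) * t) *
          ∫ s in Set.Ioi t,
            d / Real.sqrt (2 * Real.pi * s ^ 3) *
              Real.exp (-(d - c * s) ^ 2 / (2 * s)))
      atTop (nhds 0) := by
  set b := c ^ 2 / 2 with hb_def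
  have hb : 0 < b := by positivity
  have hupper : Tendsto (fun t : ℝ ↦ d * exp (d * c) / b / √(2 * π * t ^ 3)) atTop (nhds 0) :=
    tendsto_const_nhds.div_atTop <| tendsto_sqrt_atTop.comp <|
      (tendsto_pow_atTop three_ne_zero).const_mul_atTop (by positivity)
  refine tendsto_of_tendsto_of_tendsto_of_le_of_le' tendsto_const_nhds hupper
    (Eventually.of_forall fun t ↦ mul_nonneg (exp_pos _).le
      (setIntegral_nonneg measurableSet_Ioi fun s _ ↦ firstPassageDensity_nonneg hd.le c s)) ?_
  filter_upwards [eventually_gt_atTop 0] with t ht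
  have hdecay : exp ((lam * c - lam ^ 2 / 2) * t) * exp (-b * t) ≤ 1 := by
    rw [← exp_add, exp_le_one_iff]
    nlinarith [mul_le_mul_of_nonneg_right (mul_sub_sq_div_two_le_sq_div_two lam c) ht.le, hb_def]
  calc exp ((lam * c - lam ^ 2 / 2) * t) * ∫ s in Ioi t, firstPassageDensity d c s
      ≤ exp ((lam * c - lam ^ 2 / 2) * t) *
          (d * exp (d * c) / √(2 * π * t ^ 3) * (exp (-b * t) / b)) :=
        mul_le_mul_of_nonneg_left (integral_firstPassageDensity_Ioi_le hd.le hc.ne' ht)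
          (exp_pos _).le
    _ = d * exp (d * c) / b / √(2 * π * t ^ 3) *
          (exp ((lam * c - lam ^ 2 / 2) * t) * exp (-b * t)) := by ring
    _ ≤ d * exp (d * c) / b / √(2 * π * t ^ 3) := mul_le_of_le_one_right (by positivity) hdecay

/-- For `d > 0`, `c > 0` and `0 < λ ≤ c`,
`e^{(λc - λ²/2)t} ∫_t^∞ (d/√(2πs³)) e^{-(d - cs)²/(2s)} ds → 0` as `t → ∞`. -/
theorem first_passage_tail_vanishes
    (d c lam : ℝ) (hd : 0 < d) (hc : 0 < c) (hlam : 0 < lam) (hlamc : lam ≤ c) :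
    Tendsto (fun t : ℝ =>
        Real.exp ((lam * c - lam ^ 2 / 2) * t) *
          ∫ s in Set.Ioi t,
            d / Real.sqrt (2 * Real.pi * s ^ 3) *
              Real.exp (-(d - c * s) ^ 2 / (2 * s)))
      atTop (nhds 0) :=
  first_passage_tail_vanishes_general d c lam hd hc
end

section
/- Let a ≥ 0, c > 0, and let ψ : [a,∞) → ℝ be continuous with ψ(u) > 0 for u > a. Let f : [a,∞) → ℝ be continuously differentiable with f(a) = 0, f(u) > 0 for u > a, f(u) → ∞ as u → ∞, satisfying the differential equation (1/2) f'(u) f(u) - c f(u) = ψ(u) for all u > a, and suppose that f'(u) converges as u → ∞ either to a finite limit or to ∞. Then ∫_{a+1}^∞ (1/f(ξ)) dξ < ∞ if and only if ∫_{a+1}^∞ (∫_a^ξ ψ(u) du)^{-1/2} dξ < ∞. -/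
open MeasureTheory Real Set Filter

/-!
Integrating the equation from `a` gives the energy identity
`f(ξ)² = 4 Ψ(ξ) + 4c ∫_a^ξ f` with `Ψ(ξ) = ∫_a^ξ ψ`, so `√Ψ ≤ f / 2` and one implication is a
pointwise comparison. Conversely, `f` is increasing, so `∫_b^ξ f ≤ f(ξ)² ∫_b^ξ 1/f`; when `1/f` is
integrable its tails are small, hence `∫_a^ξ f = o(f(ξ)²)`, the energy identity gives
`f² ≤ 16 Ψ` eventually, and `(√Ψ)⁻¹ ≤ 4/f` near infinity.
-/

theorem sq_eq_integral_of_ode {f f' ψ : ℝ → ℝ} {a c ξ : ℝ} (hξ : a ≤ ξ)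
    (hf : ContinuousOn f (Icc a ξ)) (hf' : ∀ u ∈ Ioo a ξ, HasDerivAt f (f' u) u)
    (hode : ∀ u ∈ Ioo a ξ, 1 / 2 * f' u * f u - c * f u = ψ u)
    (hψ : IntervalIntegrable ψ volume a ξ) (hfa : f a = 0) :
    f ξ ^ 2 = 4 * (∫ u in a..ξ, ψ u) + 4 * c * ∫ u in a..ξ, f u := by
  have hf_int : IntervalIntegrable f volume a ξ := hf.intervalIntegrable_of_Icc hξ
  have hderiv : ∀ u ∈ Ioo a ξ, HasDerivAt (fun x => f x ^ 2 / 4) (ψ u + c * f u) u := by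
    intro u hu
    refine (((hf' u hu).pow 2).div_const 4).congr_deriv ?_
    rw [← hode u hu]
    ring
  have hcont : ContinuousOn (fun x => f x ^ 2 / 4) (Icc a ξ) := (hf.pow 2).div_const 4
  have hftc := intervalIntegral.integral_eq_sub_of_hasDerivAt_of_le hξ hcont hderiv
    (hψ.add (hf_int.const_mul c))
  rw [intervalIntegral.integral_add hψ (hf_int.const_mul c),
    intervalIntegral.integral_const_mul, hfa] at hftc
  linarith

theorem monotoneOn_of_ode {f f' ψ : ℝ → ℝ} {a c : ℝ} (hc : 0 ≤ c)
    (hf : ContinuousOn f (Ici a)) (hf' : ∀ u ∈ Ioi a, HasDerivAt f (f' u) u)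
    (hψ : ∀ u, a < u → 0 ≤ ψ u) (hf_pos : ∀ u, a < u → 0 < f u)
    (hode : ∀ u, a < u → 1 / 2 * f' u * f u - c * f u = ψ u) :
    MonotoneOn f (Ici a) := by
  refine monotoneOn_of_deriv_nonneg (convex_Ici a) hf ?_ ?_ <;> rw [interior_Ici]
  · exact fun u hu => (hf' u hu).differentiableAt.differentiableWithinAt
  · intro u hu
    rw [(hf' u hu).deriv]
    have hprod : 0 ≤ f' u * f u := by nlinarith [hode u hu, hψ u hu, hf_pos u hu]
    exact nonneg_of_mul_nonneg_left hprod (hf_pos u hu)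

theorem monotoneOn_integral_of_nonneg {ψ : ℝ → ℝ} {a : ℝ}
    (hψ : ∀ ξ, a ≤ ξ → IntervalIntegrable ψ volume a ξ) (hψ_nonneg : ∀ u, a < u → 0 ≤ ψ u) :
    MonotoneOn (fun ξ => ∫ u in a..ξ, ψ u) (Ici a) := fun _ hs t ht hst =>
  intervalIntegral.integral_mono_interval le_rfl hs hst
    ((ae_restrict_mem measurableSet_Ioc).mono fun u hu => hψ_nonneg u hu.1) (hψ t ht)

theorem integral_le_sq_mul_integral_inv {f : ℝ → ℝ} {b ξ : ℝ} (hbξ : b ≤ ξ)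
    (hf : MonotoneOn f (Icc b ξ)) (hfb : 0 < f b) :
    ∫ u in b..ξ, f u ≤ f ξ ^ 2 * ∫ u in b..ξ, 1 / f u := by
  have hf_pos : ∀ u ∈ Icc b ξ, 0 < f u :=
    fun u hu => hfb.trans_le (hf ⟨le_rfl, hbξ⟩ hu hu.1)
  have hinv : AntitoneOn (fun u => 1 / f u) (Icc b ξ) := fun u hu v hv huv =>
    one_div_le_one_div_of_le (hf_pos u hu) (hf hu hv huv)
  rw [← intervalIntegral.integral_const_mul]
  refine intervalIntegral.integral_mono_on hbξ
    (MonotoneOn.intervalIntegrable (by rwa [uIcc_of_le hbξ]))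
    ((AntitoneOn.intervalIntegrable (by rwa [uIcc_of_le hbξ])).const_mul _) fun u hu => ?_
  have hfu := hf_pos u hu
  rw [mul_one_div, le_div_iff₀ hfu, ← sq]
  exact pow_le_pow_left₀ hfu.le (hf hu ⟨hbξ, le_rfl⟩ hu.2) 2

theorem intervalIntegral_le_setIntegral_Ici {g : ℝ → ℝ} {b ξ : ℝ} (hbξ : b ≤ ξ)
    (hg : IntegrableOn g (Ici b)) (hg_nonneg : ∀ u ∈ Ici b, 0 ≤ g u) :
    ∫ u in b..ξ, g u ≤ ∫ u in Ici b, g u := by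
  rw [intervalIntegral.integral_of_le hbξ]
  exact setIntegral_mono_set hg ((ae_restrict_mem measurableSet_Ici).mono hg_nonneg)
    (Ioc_subset_Icc_self.trans Icc_subset_Ici_self).eventuallyLE

theorem integral_isLittleO_sq_of_integrableOn_inv {f : ℝ → ℝ} {a x : ℝ}
    (hf : MonotoneOn f (Ici a)) (hf_top : Tendsto f atTop atTop)
    (hint : IntegrableOn (fun u => 1 / f u) (Ici x)) :
    (fun ξ => ∫ u in a..ξ, f u) =o[atTop] fun ξ => f ξ ^ 2 := by
  refine Asymptotics.IsLittleO.of_bound fun ε hε => ?_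
  obtain ⟨b, hfb, hab, hxb, htail⟩ := ((hf_top.eventually_gt_atTop 0).and
    ((eventually_ge_atTop a).and ((eventually_ge_atTop x).and
      ((tendsto_integral_Ici_zero (f := fun u => 1 / f u) (μ := volume) tendsto_id).eventually
        (ge_mem_nhds (half_pos hε)))))).exists
  have hf_int : ∀ {s t}, a ≤ s → a ≤ t → IntervalIntegrable f volume s t := fun hs ht =>
    MonotoneOn.intervalIntegrable (hf.mono fun _ hu => (le_min hs ht).trans hu.1)
  have hsq_top : Tendsto (fun ξ => f ξ ^ 2) atTop atTop :=
    (tendsto_pow_atTop two_ne_zero).comp hf_top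
  filter_upwards [eventually_ge_atTop b,
    hsq_top.eventually_ge_atTop (2 / ε * ‖∫ u in a..b, f u‖)] with ξ hbξ hξ
  have hmono : MonotoneOn f (Icc b ξ) := hf.mono fun _ hu => hab.trans hu.1
  have hfb_pos : ∀ u ∈ Icc b ξ, 0 < f u := fun u hu => hfb.trans_le (hmono ⟨le_rfl, hbξ⟩ hu hu.1)
  have hinv_tail : ∫ u in b..ξ, 1 / f u ≤ ε / 2 :=
    (intervalIntegral_le_setIntegral_Ici hbξ (hint.mono_set (Ici_subset_Ici.2 hxb))
      fun u hu => (one_div_pos.2 (hfb.trans_le (hf hab (Ici_subset_Ici.2 hab hu) hu))).le).trans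
      htail
  have hhead : ‖∫ u in a..b, f u‖ ≤ ε / 2 * f ξ ^ 2 :=
    calc ‖∫ u in a..b, f u‖ = ε / 2 * (2 / ε * ‖∫ u in a..b, f u‖) := by field_simp
      _ ≤ ε / 2 * f ξ ^ 2 := by gcongr
  have hbody : ∫ u in b..ξ, f u ≤ ε / 2 * f ξ ^ 2 := by
    rw [mul_comm]
    exact (integral_le_sq_mul_integral_inv hbξ hmono hfb).trans
      (mul_le_mul_of_nonneg_left hinv_tail (sq_nonneg _))
  rw [← intervalIntegral.integral_add_adjacent_intervals (hf_int le_rfl hab)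
    (hf_int hab (hab.trans hbξ)), Real.norm_of_nonneg (sq_nonneg _)]
  calc ‖(∫ u in a..b, f u) + ∫ u in b..ξ, f u‖
      ≤ ‖∫ u in a..b, f u‖ + ∫ u in b..ξ, f u := by
        refine (norm_add_le _ _).trans_eq ?_
        rw [Real.norm_of_nonneg (intervalIntegral.integral_nonneg hbξ
          fun u hu => (hfb_pos u hu).le)]
    _ ≤ ε * f ξ ^ 2 := by linarith

theorem eventually_sq_le_of_isLittleO {f Ψ F : ℝ → ℝ} {c : ℝ}
    (henergy : ∀ᶠ ξ in atTop, f ξ ^ 2 = 4 * Ψ ξ + 4 * c * F ξ)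
    (hF : F =o[atTop] fun ξ => f ξ ^ 2) :
    ∀ᶠ ξ in atTop, f ξ ^ 2 ≤ 16 * Ψ ξ := by
  filter_upwards [henergy, (hF.const_mul_left (4 * c)).bound (by norm_num : (0 : ℝ) < 3 / 4)]
    with ξ hξ hbound
  rw [Real.norm_of_nonneg (sq_nonneg _), Real.norm_eq_abs] at hbound
  linarith [le_abs_self (4 * c * F ξ)]

theorem inv_sqrt_le_of_sq_le {x y : ℝ} (hy : 0 < y) (h : y ^ 2 ≤ 16 * x) :
    (√x)⁻¹ ≤ 4 * (1 / y) := by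
  have hsqrt : y / 4 ≤ √x := (Real.le_sqrt' (by positivity)).2 (by linarith)
  calc (√x)⁻¹ ≤ (y / 4)⁻¹ := inv_anti₀ (by positivity) hsqrt
    _ = 4 * (1 / y) := by field_simp

theorem integrableOn_of_lintegral_ofReal_ne_top {g : ℝ → ℝ} {s : Set ℝ} (hs : MeasurableSet s)
    (hg : ContinuousOn g s) (hg_nonneg : ∀ x ∈ s, 0 ≤ g x)
    (h : ∫⁻ x in s, ENNReal.ofReal (g x) ≠ ⊤) : IntegrableOn g s :=
  (lintegral_ofReal_ne_top_iff_integrable (hg.aestronglyMeasurable hs)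
    ((ae_restrict_mem hs).mono hg_nonneg)).1 h

theorem lintegral_Ici_ne_top_of_eventually_le {g h : ℝ → ℝ} {x M K : ℝ} (hK : 0 ≤ K)
    (hgM : ∀ ξ ∈ Ici x, g ξ ≤ M) (hgh : ∀ᶠ ξ in atTop, g ξ ≤ K * h ξ)
    (hh : ∫⁻ ξ in Ici x, ENNReal.ofReal (h ξ) ≠ ⊤) :
    ∫⁻ ξ in Ici x, ENNReal.ofReal (g ξ) ≠ ⊤ := by
  obtain ⟨B, hB⟩ := eventually_atTop.1 (hgh.and (eventually_ge_atTop x))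
  have hxB : x ≤ B := (hB B le_rfl).2
  have hhead : ∫⁻ ξ in Icc x B, ENNReal.ofReal (g ξ) ≠ ⊤ := by
    refine ne_top_of_le_ne_top ?_ (setLIntegral_mono' measurableSet_Icc
      fun ξ hξ => ENNReal.ofReal_le_ofReal (hgM ξ hξ.1))
    rw [setLIntegral_const, Real.volume_Icc]
    exact ENNReal.mul_ne_top ENNReal.ofReal_ne_top ENNReal.ofReal_ne_top
  have htail : ∫⁻ ξ in Ici B, ENNReal.ofReal (g ξ) ≠ ⊤ := by
    refine ne_top_of_le_ne_top ?_ (setLIntegral_mono' measurableSet_Ici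
      fun ξ hξ => (ENNReal.ofReal_le_ofReal ((hB ξ hξ).1)).trans_eq (ENNReal.ofReal_mul hK))
    rw [lintegral_const_mul' _ _ ENNReal.ofReal_ne_top]
    exact ENNReal.mul_ne_top ENNReal.ofReal_ne_top
      (ne_top_of_le_ne_top hh (lintegral_mono_set (Ici_subset_Ici.2 hxB)))
  refine ne_top_of_le_ne_top (ENNReal.add_ne_top.2 ⟨hhead, htail⟩) ?_
  rw [← Icc_union_Ici_eq_Ici hxB]
  exact lintegral_union_le _ _ _

theorem lintegral_inv_sqrt_ne_top_of_lintegral_inv_ne_top {f Ψ : ℝ → ℝ} {a c m x : ℝ}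
    (hf_mono : MonotoneOn f (Ici a)) (hf_cont : ContinuousOn f (Ici x))
    (hf_pos : ∀ ξ ∈ Ici x, 0 < f ξ) (hf_top : Tendsto f atTop atTop)
    (henergy : ∀ᶠ ξ in atTop, f ξ ^ 2 = 4 * Ψ ξ + 4 * c * ∫ u in a..ξ, f u)
    (hm : 0 < m) (hΨ : ∀ ξ ∈ Ici x, m ≤ Ψ ξ)
    (h : ∫⁻ ξ in Ici x, ENNReal.ofReal (1 / f ξ) ≠ ⊤) :
    ∫⁻ ξ in Ici x, ENNReal.ofReal ((√(Ψ ξ))⁻¹) ≠ ⊤ := by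
  have hint := integrableOn_of_lintegral_ofReal_ne_top measurableSet_Ici
    (continuousOn_const.div hf_cont fun u hu => (hf_pos u hu).ne')
    (fun u hu => (one_div_pos.2 (hf_pos u hu)).le) h
  have hsq := eventually_sq_le_of_isLittleO henergy
    (integral_isLittleO_sq_of_integrableOn_inv hf_mono hf_top hint)
  refine lintegral_Ici_ne_top_of_eventually_le (by norm_num : (0 : ℝ) ≤ 4)
    (fun ξ hξ => inv_anti₀ (sqrt_pos.2 hm) (sqrt_le_sqrt (hΨ ξ hξ))) ?_ h
  filter_upwards [hsq, eventually_ge_atTop x] with ξ hξ hxξ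
  exact inv_sqrt_le_of_sq_le (hf_pos ξ hxξ) hξ

theorem lintegral_inv_ne_top_of_lintegral_inv_sqrt_ne_top {f Ψ : ℝ → ℝ} {x : ℝ}
    (hΨ_pos : ∀ ξ ∈ Ici x, 0 < Ψ ξ) (hΨ_le : ∀ ξ ∈ Ici x, Ψ ξ ≤ f ξ ^ 2)
    (hf_nonneg : ∀ ξ ∈ Ici x, 0 ≤ f ξ)
    (h : ∫⁻ ξ in Ici x, ENNReal.ofReal ((√(Ψ ξ))⁻¹) ≠ ⊤) :
    ∫⁻ ξ in Ici x, ENNReal.ofReal (1 / f ξ) ≠ ⊤ := by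
  refine ne_top_of_le_ne_top h (setLIntegral_mono' measurableSet_Ici fun ξ hξ =>
    ENNReal.ofReal_le_ofReal ?_)
  rw [one_div]
  exact inv_anti₀ (sqrt_pos.2 (hΨ_pos ξ hξ)) ((sqrt_le_left (hf_nonneg ξ hξ)).2 (hΨ_le ξ hξ))

theorem extinction_iff_A3_general
    (a c : ℝ) (hc : 0 < c)
    (ψ f f' : ℝ → ℝ)
    (hψ_cont : ContinuousOn ψ (Set.Ici a))
    (hψ_pos : ∀ u : ℝ, a < u → 0 < ψ u)
    (hf_deriv : ∀ u ∈ Set.Ici a, HasDerivAt f (f' u) u)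
    (hfa : f a = 0)
    (hf_pos : ∀ u : ℝ, a < u → 0 < f u)
    (hf_top : Tendsto f atTop atTop)
    (hODE : ∀ u : ℝ, a < u → (1 / 2) * f' u * f u - c * f u = ψ u) :
    (∫⁻ ξ in Set.Ici (a + 1), ENNReal.ofReal (1 / f ξ) ≠ ⊤) ↔
    (∫⁻ ξ in Set.Ici (a + 1),
        ENNReal.ofReal ((Real.sqrt (∫ u in a..ξ, ψ u))⁻¹) ≠ ⊤) := by
  have hf_cont : ContinuousOn f (Ici a) := fun u hu =>
    (hf_deriv u hu).continuousAt.continuousWithinAt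
  have hf_mono : MonotoneOn f (Ici a) := monotoneOn_of_ode hc.le hf_cont
    (fun u hu => hf_deriv u (mem_Ici.2 hu.out.le)) (fun u hu => (hψ_pos u hu).le) hf_pos hODE
  have hψ_int : ∀ ξ, a ≤ ξ → IntervalIntegrable ψ volume a ξ := fun ξ hξ =>
    (hψ_cont.mono Icc_subset_Ici_self).intervalIntegrable_of_Icc hξ
  have henergy : ∀ ξ, a ≤ ξ →
      f ξ ^ 2 = 4 * (∫ u in a..ξ, ψ u) + 4 * c * ∫ u in a..ξ, f u := fun ξ hξ =>
    sq_eq_integral_of_ode hξ (hf_cont.mono Icc_subset_Ici_self)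
      (fun u hu => hf_deriv u hu.1.le) (fun u hu => hODE u hu.1) (hψ_int ξ hξ) hfa
  have hΨ_pos : 0 < ∫ u in a..a + 1, ψ u := intervalIntegral.intervalIntegral_pos_of_pos_on
    (hψ_int _ (by linarith)) (fun u hu => hψ_pos u hu.1) (by linarith)
  have hΨ_ge : ∀ ξ ∈ Ici (a + 1), (∫ u in a..a + 1, ψ u) ≤ ∫ u in a..ξ, ψ u := fun ξ hξ =>
    monotoneOn_integral_of_nonneg hψ_int (fun u hu => (hψ_pos u hu).le) (by simp)
      (mem_Ici.2 (by linarith [hξ.out])) hξ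
  have hf_pos' : ∀ ξ ∈ Ici (a + 1), 0 < f ξ := fun ξ hξ => hf_pos ξ (by linarith [hξ.out])
  constructor
  · exact lintegral_inv_sqrt_ne_top_of_lintegral_inv_ne_top hf_mono
      (hf_cont.mono (Ici_subset_Ici.2 (by linarith))) hf_pos' hf_top
      ((eventually_ge_atTop a).mono henergy) hΨ_pos hΨ_ge
  · refine lintegral_inv_ne_top_of_lintegral_inv_sqrt_ne_top
      (fun ξ hξ => hΨ_pos.trans_le (hΨ_ge ξ hξ)) (fun ξ hξ => ?_) (fun ξ hξ => (hf_pos' ξ hξ).le)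
    have haξ : a ≤ ξ := by linarith [hξ.out]
    have hF : 0 ≤ ∫ u in a..ξ, f u := intervalIntegral.integral_nonneg haξ fun u hu =>
      hfa ▸ hf_mono self_mem_Ici hu.1 hu.1
    linarith [henergy ξ haξ, mul_nonneg hc.le hF, hΨ_pos.trans_le (hΨ_ge ξ hξ)]

/-- Let `a ≥ 0`, `c > 0`, `ψ` continuous on `[a,∞)` and positive on
`(a,∞)`, and let `f` be continuously differentiable on `[a,∞)` with `f(a) = 0`,
`f > 0` on `(a,∞)`, `f → ∞` at `∞`, satisfying `(1/2) f'(u) f(u) - c f(u) = ψ(u)`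
for `u > a`, with `f'` converging (to a finite limit or to `∞`) at `∞`. Then
`∫_{a+1}^∞ 1/f(ξ) dξ < ∞ ↔ ∫_{a+1}^∞ (∫_a^ξ ψ(u) du)^{-1/2} dξ < ∞`. -/
theorem extinction_iff_A3
    (a c : ℝ) (ha : 0 ≤ a) (hc : 0 < c)
    (ψ f f' : ℝ → ℝ)
    (hψ_cont : ContinuousOn ψ (Set.Ici a))
    (hψ_pos : ∀ u : ℝ, a < u → 0 < ψ u)
    (hf_deriv : ∀ u ∈ Set.Ici a, HasDerivAt f (f' u) u)
    (hf'_cont : ContinuousOn f' (Set.Ici a))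
    (hfa : f a = 0)
    (hf_pos : ∀ u : ℝ, a < u → 0 < f u)
    (hf_top : Tendsto f atTop atTop)
    (hODE : ∀ u : ℝ, a < u → (1 / 2) * f' u * f u - c * f u = ψ u)
    (hf'_conv : (∃ L : ℝ, Tendsto f' atTop (nhds L)) ∨ Tendsto f' atTop atTop) :
    (∫⁻ ξ in Set.Ici (a + 1), ENNReal.ofReal (1 / f ξ) ≠ ⊤) ↔
    (∫⁻ ξ in Set.Ici (a + 1),
        ENNReal.ofReal ((Real.sqrt (∫ u in a..ξ, ψ u))⁻¹) ≠ ⊤) :=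
  extinction_iff_A3_general a c hc ψ f f' hψ_cont hψ_pos hf_deriv hfa hf_pos hf_top hODE
end
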